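/- arXiv:1010.4432 — 2 statements merged into one kernel-verified Lean document; each statement's English description precedes it below -/
import Mathlib

section
/- Let g : [0,1] → ℝ be continuously differentiable with M = max_{x∈[0,1]} |g'(x)|, and let Ug(x) = ∑_{i=1}^∞ P_i(x) g(1/(x+i)) with P_i(x) = (x+1)/((x+i)(x+i+1)). Then max_{x∈[0,1]} |(Ug)'(x)| ≤ (2ζ(3) - ζ(2)) · M. -/
/-!
Differentiate the series termwise. Writing `P_i' = σ_i - σ_{i+1}` with `σ_i = (i-1)/(x+i)^2`,
summation by parts turns the part of `(Ug)'` involving `g` into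
`∑ σ_{i+1} (g(1/(x+i+1)) - g(1/(x+i)))`, which the mean value theorem bounds by
`M ∑ i/((x+i)(x+i+1)^3)`; the chain-rule part is at most `M ∑ P_i(x)/(x+i)^2`. For each `i` the
sum of the two bounds is largest at `x = 0`, where it is `1/(i+1)^3 + 1/(i^3(i+1))`, and these
add up to `2ζ(3) - ζ(2)`.
-/

/-- The Riemann zeta function at a natural argument, as a real series. -/
noncomputable def zetaR (s : ℕ) : ℝ := ∑' n : ℕ, 1 / ((n : ℝ) + 1) ^ s

open Filter Topology Set

/-- On a convex set the slopes of `f n` are dominated by `u n`, so Tannery's theorem lets the slope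
of the sum converge termwise. -/
theorem hasDerivWithinAt_tsum_of_convex {𝕜 G : Type*} [RCLike 𝕜] [NormedAddCommGroup G]
    [NormedSpace 𝕜 G] [CompleteSpace G] {f f' : ℕ → 𝕜 → G} {u : ℕ → ℝ} {s : Set 𝕜} {x₀ x : 𝕜}
    (hs : Convex ℝ s) (hu : Summable u) (hf : ∀ n, ∀ y ∈ s, HasDerivWithinAt (f n) (f' n y) s y)
    (hf' : ∀ n, ∀ y ∈ s, ‖f' n y‖ ≤ u n) (hx₀ : x₀ ∈ s) (hf₀ : Summable (f · x₀)) (hx : x ∈ s) :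
    HasDerivWithinAt (fun y => ∑' n, f n y) (∑' n, f' n x) s x := by
  have hlip : ∀ n, ∀ y ∈ s, ∀ z ∈ s, ‖f n z - f n y‖ ≤ u n * ‖z - y‖ := fun n y hy z hz =>
    hs.norm_image_sub_le_of_norm_hasDerivWithin_le (hf n) (hf' n) hy hz
  have hsum : ∀ y ∈ s, Summable (f · y) := fun y hy => by
    simpa using ((hu.mul_right ‖y - x₀‖).of_norm_bounded (hlip · x₀ hx₀ y hy)).add hf₀
  have hslope : ∀ n, ∀ y ∈ s, ‖slope (f n) x y‖ ≤ u n := fun n y hy => by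
    rcases eq_or_ne y x with rfl | hne
    · simpa using (norm_nonneg _).trans (hf' n y hy)
    rw [slope_def_module, norm_smul, norm_inv, inv_mul_le_iff₀ (norm_pos_iff.2 (sub_ne_zero.2 hne)),
      mul_comm]
    exact hlip n x hx y hy
  rw [hasDerivWithinAt_iff_tendsto_slope]
  refine (tendsto_tsum_of_dominated_convergence hu
    (fun n => hasDerivWithinAt_iff_tendsto_slope.1 (hf n x hx)) ?_).congr' ?_
  · filter_upwards [self_mem_nhdsWithin] with y hy using fun n => hslope n y hy.1
  · filter_upwards [self_mem_nhdsWithin] with y hy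
    simp only [slope_def_module]
    rw [Summable.tsum_const_smul _ ((hsum y hy.1).sub (hsum x hx)),
      (hsum y hy.1).tsum_sub (hsum x hx)]

theorem tsum_sub_mul_add_eq_tsum_mul_sub_add {R : Type*} [CommRing R] [TopologicalSpace R]
    [IsTopologicalAddGroup R] [T2Space R] {a b c : ℕ → R} (ha : a 0 = 0)
    (hab : Tendsto (fun n => a n * b n) atTop (𝓝 0))
    (h₁ : Summable fun n => (a n - a (n + 1)) * b n + c n)
    (h₂ : Summable fun n => a (n + 1) * (b (n + 1) - b n) + c n) :
    ∑' n, ((a n - a (n + 1)) * b n + c n) = ∑' n, (a (n + 1) * (b (n + 1) - b n) + c n) := by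
  have hpartial : ∀ N, ∑ n ∈ Finset.range N, ((a n - a (n + 1)) * b n + c n) -
      ∑ n ∈ Finset.range N, (a (n + 1) * (b (n + 1) - b n) + c n) = -(a N * b N) := fun N => by
    rw [← Finset.sum_sub_distrib, ← zero_sub, ← zero_mul (b 0), ← ha,
      ← Finset.sum_range_sub' (fun n => a n * b n)]
    exact Finset.sum_congr rfl fun n _ => by ring
  have := (h₁.hasSum.tendsto_sum_nat.sub h₂.hasSum.tendsto_sum_nat)
  simp only [hpartial] at this
  exact sub_eq_zero.1 (tendsto_nhds_unique this (by simpa using hab.neg))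

theorem summable_one_div_succ_pow {p : ℕ} (hp : 1 < p) :
    Summable fun n : ℕ => 1 / ((n : ℝ) + 1) ^ p := by
  simpa using (_root_.summable_nat_add_iff 1).2 (Real.summable_one_div_nat_pow.2 hp)

theorem Antitone.hasSum_sub_succ {f : ℕ → ℝ} {l : ℝ} (hf : Antitone f)
    (hl : Tendsto f atTop (𝓝 l)) : HasSum (fun n => f n - f (n + 1)) (f 0 - l) := by
  refine (hasSum_iff_tendsto_nat_of_nonneg (fun n => sub_nonneg.2 (hf n.le_succ)) _).2 ?_
  simp only [Finset.sum_range_sub']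
  exact hl.const_sub _

theorem hasSum_zetaR {p : ℕ} (hp : 1 < p) :
    HasSum (fun n : ℕ => 1 / ((n : ℝ) + 1) ^ p) (zetaR p) :=
  (summable_one_div_succ_pow hp).hasSum

theorem hasSum_two_mul_zetaR_three_sub_zetaR_two :
    HasSum (fun n : ℕ => 1 / ((n : ℝ) + 2) ^ 3 + 1 / (((n : ℝ) + 1) ^ 3 * ((n : ℝ) + 2)))
      (2 * zetaR 3 - zetaR 2) := by
  have hζ₃ := hasSum_zetaR (p := 3) (by norm_num)
  have hshift := (hasSum_nat_add_iff' 1).2 hζ₃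
  have htele := Antitone.hasSum_sub_succ (f := fun n : ℕ => 1 / ((n : ℝ) + 1))
    (fun m n h => by simp only; gcongr) tendsto_one_div_add_atTop_nhds_zero_nat
  have hsum := (hζ₃.sub (hasSum_zetaR one_lt_two)).add (hshift.add htele)
  have hterm : ∀ n : ℕ, 1 / ((n : ℝ) + 2) ^ 3 + 1 / (((n : ℝ) + 1) ^ 3 * ((n : ℝ) + 2)) =
      1 / ((n : ℝ) + 1) ^ 3 - 1 / ((n : ℝ) + 1) ^ 2 +
        (1 / (((n + 1 : ℕ) : ℝ) + 1) ^ 3 + (1 / ((n : ℝ) + 1) - 1 / (((n + 1 : ℕ) : ℝ) + 1))) :=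
    fun n => by push_cast; field_simp; ring
  rw [funext hterm]
  convert hsum using 1
  · rfl
  · norm_num
    ring

/-- `gaussWeight n`, `gaussPoint n y` and `gaussPF g` are the paper's `P_{n+1}`, `1/(y+n+1)` and
`Ug`; `abelWeight n` is `σ_{n+1}`. -/
noncomputable def gaussWeight (n : ℕ) (y : ℝ) : ℝ := (y + 1) / ((y + (n + 1)) * (y + (n + 1) + 1))

noncomputable def gaussPoint (n : ℕ) (y : ℝ) : ℝ := 1 / (y + (n + 1))

noncomputable def abelWeight (n : ℕ) (y : ℝ) : ℝ := n / (y + (n + 1)) ^ 2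

section
variable {n : ℕ} {y : ℝ}

theorem add_natCast_add_one_pos (hy : 0 ≤ y) : 0 < y + (n + 1) :=
  n.cast_add_one_pos.trans_le (le_add_of_nonneg_left hy)

theorem gaussPoint_mem_Icc (hy : 0 ≤ y) : gaussPoint n y ∈ Icc 0 1 :=
  ⟨(one_div_pos.2 (add_natCast_add_one_pos hy)).le,
    div_le_one_of_le₀ (le_trans (by simp) (le_add_of_nonneg_left hy))
      (add_natCast_add_one_pos hy).le⟩

theorem gaussPoint_le (hy : 0 ≤ y) : gaussPoint n y ≤ 1 / (n + 1) :=
  one_div_le_one_div_of_le n.cast_add_one_pos (le_add_of_nonneg_left hy)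

theorem hasDerivAt_gaussPoint (hy : 0 ≤ y) :
    HasDerivAt (gaussPoint n) (-gaussPoint n y ^ 2) y := by
  have hA := add_natCast_add_one_pos (n := n) hy
  refine ((hasDerivAt_const y (1 : ℝ)).fun_div ((hasDerivAt_id' y).add_const ((n : ℝ) + 1))
    hA.ne').congr_deriv ?_
  unfold gaussPoint
  field_simp
  ring

theorem hasDerivAt_gaussWeight (hy : 0 ≤ y) :
    HasDerivAt (gaussWeight n) (abelWeight n y - abelWeight (n + 1) y) y := by
  have hA := add_natCast_add_one_pos (n := n) hy
  have hB : 0 < y + (n + 1) + 1 := by linarith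
  have hA' := (hasDerivAt_id' y).add_const ((n : ℝ) + 1)
  refine (((hasDerivAt_id' y).add_const 1).fun_div (hA'.fun_mul (hA'.add_const 1))
    (mul_pos hA hB).ne').congr_deriv ?_
  unfold abelWeight
  push_cast
  field_simp
  ring

theorem gaussWeight_nonneg (hy : 0 ≤ y) : 0 ≤ gaussWeight n y := by
  have hA := add_natCast_add_one_pos (n := n) hy
  unfold gaussWeight; positivity

theorem gaussWeight_le_one (hy : 0 ≤ y) : gaussWeight n y ≤ 1 := by
  have hA := add_natCast_add_one_pos (n := n) hy
  unfold gaussWeight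
  rw [div_le_one (by positivity)]
  nlinarith [n.cast_nonneg (α := ℝ)]

theorem abelWeight_nonneg : 0 ≤ abelWeight n y := by
  unfold abelWeight; positivity

theorem abelWeight_le (hy : 0 ≤ y) : abelWeight n y ≤ 1 / (n + 1) := by
  have hA := add_natCast_add_one_pos (n := n) hy
  unfold abelWeight
  rw [div_le_div_iff₀ (by positivity) n.cast_add_one_pos]
  nlinarith [n.cast_nonneg (α := ℝ)]

theorem abs_abelWeight_sub_succ_le (hy : 0 ≤ y) :
    |abelWeight n y - abelWeight (n + 1) y| ≤ 1 / (n + 1) ^ 2 := by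
  have hn := n.cast_nonneg (α := ℝ)
  have hA := add_natCast_add_one_pos (n := n) hy
  have hD : 0 < (y + (n + 1)) ^ 2 * (y + (n + 1) + 1) ^ 2 := by positivity
  have key : abelWeight n y - abelWeight (n + 1) y =
      (n * (2 * (y + (n + 1)) + 1) - (y + (n + 1)) ^ 2) /
        ((y + (n + 1)) ^ 2 * (y + (n + 1) + 1) ^ 2) := by
    unfold abelWeight; push_cast; field_simp; ring
  have hnum : |n * (2 * (y + (n + 1)) + 1) - (y + (n + 1)) ^ 2| ≤ (y + (n + 1)) ^ 2 := by
    rw [abs_le]; constructor <;> nlinarith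
  calc |abelWeight n y - abelWeight (n + 1) y|
      ≤ (y + (n + 1)) ^ 2 / ((y + (n + 1)) ^ 2 * (y + (n + 1) + 1) ^ 2) := by
        rw [key, abs_div, abs_of_pos hD]; gcongr
    _ = 1 / (y + (n + 1) + 1) ^ 2 := by field_simp
    _ ≤ 1 / (n + 1) ^ 2 := by gcongr; linarith

theorem gaussPoint_succ_le (hy : 0 ≤ y) : gaussPoint (n + 1) y ≤ gaussPoint n y :=
  one_div_le_one_div_of_le (add_natCast_add_one_pos hy) (by push_cast; linarith)

theorem gaussWeight_zero_le : gaussWeight n 0 ≤ 1 / (n + 1) ^ 2 := by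
  unfold gaussWeight
  rw [div_le_div_iff₀ (by positivity) (by positivity)]
  nlinarith

theorem abelWeight_zero : abelWeight 0 y = 0 := by
  simp [abelWeight]

theorem abelWeight_succ_mul_sub_add_gaussWeight_mul_sq_le (hy : 0 ≤ y) :
    abelWeight (n + 1) y * (gaussPoint n y - gaussPoint (n + 1) y) +
        gaussWeight n y * gaussPoint n y ^ 2 ≤
      1 / ((n : ℝ) + 2) ^ 3 + 1 / (((n : ℝ) + 1) ^ 3 * ((n : ℝ) + 2)) := by
  -- cleared of denominators, the difference is a polynomial in `y` and `n` with nonnegative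
  -- coefficients
  lift y to NNReal using hy
  unfold abelWeight gaussPoint gaussWeight
  push_cast
  field_simp
  rw [← sub_nonneg]
  ring_nf
  positivity

end

noncomputable def gaussPF (g : ℝ → ℝ) (y : ℝ) : ℝ :=
  ∑' n : ℕ, gaussWeight n y * g (gaussPoint n y)

noncomputable def gaussChainTerm (g : ℝ → ℝ) (n : ℕ) (y : ℝ) : ℝ :=
  gaussWeight n y * (derivWithin g (Icc 0 1) (gaussPoint n y) * -gaussPoint n y ^ 2)

section
variable {g : ℝ → ℝ} {C M : ℝ} {n : ℕ} {y : ℝ}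

theorem hasDerivWithinAt_gaussTerm (hg : DifferentiableOn ℝ g (Icc 0 1)) (hy : 0 ≤ y) :
    HasDerivWithinAt (fun z => gaussWeight n z * g (gaussPoint n z))
      ((abelWeight n y - abelWeight (n + 1) y) * g (gaussPoint n y) + gaussChainTerm g n y)
      (Icc 0 1) y :=
  (hasDerivAt_gaussWeight hy).hasDerivWithinAt.fun_mul
    ((hg _ (gaussPoint_mem_Icc hy)).hasDerivWithinAt.comp y
      (hasDerivAt_gaussPoint hy).hasDerivWithinAt fun _ hz => gaussPoint_mem_Icc hz.1)

theorem abs_gaussChainTerm_le (hM : ∀ z ∈ Icc 0 1, |derivWithin g (Icc 0 1) z| ≤ M)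
    (hy : 0 ≤ y) : |gaussChainTerm g n y| ≤ M * (gaussWeight n y * gaussPoint n y ^ 2) := by
  have hP := gaussWeight_nonneg (n := n) hy
  calc |gaussChainTerm g n y|
      = |derivWithin g (Icc 0 1) (gaussPoint n y)| * (gaussWeight n y * gaussPoint n y ^ 2) := by
        rw [gaussChainTerm, abs_mul, abs_mul, abs_neg, abs_of_nonneg hP,
          abs_of_nonneg (sq_nonneg (gaussPoint n y))]
        ring
    _ ≤ M * (gaussWeight n y * gaussPoint n y ^ 2) := by
        gcongr; exact hM _ (gaussPoint_mem_Icc hy)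

theorem abs_gaussTermDeriv_le (hC : ∀ z ∈ Icc 0 1, |g z| ≤ C)
    (hM : ∀ z ∈ Icc 0 1, |derivWithin g (Icc 0 1) z| ≤ M) (hy : 0 ≤ y) :
    |(abelWeight n y - abelWeight (n + 1) y) * g (gaussPoint n y) + gaussChainTerm g n y| ≤
      (C + M) * (1 / (n + 1) ^ 2) := by
  have hM0 : 0 ≤ M := (abs_nonneg _).trans (hM 0 (left_mem_Icc.2 zero_le_one))
  have hPu : gaussWeight n y * gaussPoint n y ^ 2 ≤ 1 * (1 / (n + 1)) ^ 2 := by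
    gcongr
    · exact gaussWeight_le_one hy
    · exact (gaussPoint_mem_Icc hy).1
    · exact gaussPoint_le hy
  calc _ ≤ |abelWeight n y - abelWeight (n + 1) y| * |g (gaussPoint n y)| +
        M * (gaussWeight n y * gaussPoint n y ^ 2) :=
        (abs_add_le _ _).trans (by rw [abs_mul]; gcongr; exact abs_gaussChainTerm_le hM hy)
    _ ≤ 1 / (n + 1) ^ 2 * C + M * (1 * (1 / (n + 1)) ^ 2) := by
        gcongr
        · exact abs_abelWeight_sub_succ_le hy
        · exact hC _ (gaussPoint_mem_Icc hy)
    _ = (C + M) * (1 / (n + 1) ^ 2) := by rw [div_pow, one_pow]; ring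

theorem summable_gaussTermDeriv (hC : ∀ z ∈ Icc 0 1, |g z| ≤ C)
    (hM : ∀ z ∈ Icc 0 1, |derivWithin g (Icc 0 1) z| ≤ M) (hy : 0 ≤ y) :
    Summable fun n =>
      (abelWeight n y - abelWeight (n + 1) y) * g (gaussPoint n y) + gaussChainTerm g n y :=
  ((summable_one_div_succ_pow one_lt_two).mul_left (C + M)).of_norm_bounded
    fun _ => abs_gaussTermDeriv_le hC hM hy

theorem hasDerivWithinAt_gaussPF (hg : DifferentiableOn ℝ g (Icc 0 1))
    (hC : ∀ z ∈ Icc 0 1, |g z| ≤ C) (hM : ∀ z ∈ Icc 0 1, |derivWithin g (Icc 0 1) z| ≤ M)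
    (hy : y ∈ Icc 0 1) :
    HasDerivWithinAt (gaussPF g)
      (∑' n, ((abelWeight n y - abelWeight (n + 1) y) * g (gaussPoint n y) +
        gaussChainTerm g n y)) (Icc 0 1) y := by
  have hsum₀ : Summable fun n => gaussWeight n 0 * g (gaussPoint n 0) := by
    refine ((summable_one_div_succ_pow one_lt_two).mul_right C).of_norm_bounded fun n => ?_
    rw [Real.norm_eq_abs, abs_mul, abs_of_nonneg (gaussWeight_nonneg le_rfl)]
    exact mul_le_mul gaussWeight_zero_le (hC _ (gaussPoint_mem_Icc le_rfl)) (abs_nonneg _)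
      (by positivity)
  exact hasDerivWithinAt_tsum_of_convex (convex_Icc 0 1)
    ((summable_one_div_succ_pow one_lt_two).mul_left (C + M))
    (fun _ z hz => hasDerivWithinAt_gaussTerm hg hz.1)
    (fun _ z hz => abs_gaussTermDeriv_le hC hM hz.1) (left_mem_Icc.2 zero_le_one) hsum₀ hy

theorem tendsto_abelWeight_mul (hC : ∀ z ∈ Icc 0 1, |g z| ≤ C) (hy : 0 ≤ y) :
    Tendsto (fun n => abelWeight n y * g (gaussPoint n y)) atTop (𝓝 0) := by
  refine squeeze_zero_norm (a := fun n : ℕ => 1 / ((n : ℝ) + 1) * C) (fun n => ?_)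
    (by simpa using tendsto_one_div_add_atTop_nhds_zero_nat.mul_const C)
  rw [Real.norm_eq_abs, abs_mul, abs_of_nonneg abelWeight_nonneg]
  exact mul_le_mul (abelWeight_le hy) (hC _ (gaussPoint_mem_Icc hy)) (abs_nonneg _)
    (by positivity)

theorem abs_abelTerm_add_gaussChainTerm_le (hg : DifferentiableOn ℝ g (Icc 0 1))
    (hM : ∀ z ∈ Icc 0 1, |derivWithin g (Icc 0 1) z| ≤ M) (hy : 0 ≤ y) :
    |abelWeight (n + 1) y * (g (gaussPoint (n + 1) y) - g (gaussPoint n y)) +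
        gaussChainTerm g n y| ≤
      M * (1 / ((n : ℝ) + 2) ^ 3 + 1 / (((n : ℝ) + 1) ^ 3 * ((n : ℝ) + 2))) := by
  have hM0 : 0 ≤ M := (abs_nonneg _).trans (hM 0 (left_mem_Icc.2 zero_le_one))
  have hlip : |g (gaussPoint (n + 1) y) - g (gaussPoint n y)| ≤
      M * (gaussPoint n y - gaussPoint (n + 1) y) := by
    have := (convex_Icc (0 : ℝ) 1).norm_image_sub_le_of_norm_derivWithin_le hg hM
      (gaussPoint_mem_Icc (n := n) hy) (gaussPoint_mem_Icc (n := n + 1) hy)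
    rwa [Real.norm_eq_abs, Real.norm_eq_abs, abs_sub_comm (gaussPoint _ _),
      abs_of_nonneg (sub_nonneg.2 (gaussPoint_succ_le hy))] at this
  calc _ ≤ abelWeight (n + 1) y * (M * (gaussPoint n y - gaussPoint (n + 1) y)) +
        M * (gaussWeight n y * gaussPoint n y ^ 2) := by
        refine (abs_add_le _ _).trans (add_le_add ?_ (abs_gaussChainTerm_le hM hy))
        rw [abs_mul, abs_of_nonneg abelWeight_nonneg]
        exact mul_le_mul_of_nonneg_left hlip abelWeight_nonneg
    _ = M * (abelWeight (n + 1) y * (gaussPoint n y - gaussPoint (n + 1) y) +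
        gaussWeight n y * gaussPoint n y ^ 2) := by ring
    _ ≤ _ := mul_le_mul_of_nonneg_left (abelWeight_succ_mul_sub_add_gaussWeight_mul_sq_le hy) hM0

end

theorem perron_frobenius_contraction (g : ℝ → ℝ)
    (hg : ContDiffOn ℝ 1 g (Set.Icc 0 1)) (M : ℝ)
    (hM : IsGreatest {y : ℝ | ∃ x ∈ Set.Icc (0:ℝ) 1, y = |derivWithin g (Set.Icc 0 1) x|} M) :
    ∀ x ∈ Set.Icc (0:ℝ) 1,
      |derivWithin
        (fun y : ℝ => ∑' i : ℕ,
          (y + 1) / ((y + (i + 1)) * (y + (i + 1) + 1)) * g (1 / (y + (i + 1))))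
        (Set.Icc 0 1) x| ≤ (2 * zetaR 3 - zetaR 2) * M := by
  intro x hx
  have hgd : DifferentiableOn ℝ g (Icc 0 1) := hg.differentiableOn one_ne_zero
  have hM' : ∀ z ∈ Icc 0 1, |derivWithin g (Icc 0 1) z| ≤ M := fun z hz => hM.2 ⟨z, hz, rfl⟩
  obtain ⟨C, hC⟩ := isCompact_Icc.exists_bound_of_continuousOn hgd.continuousOn
  simp only [Real.norm_eq_abs] at hC
  change |derivWithin (gaussPF g) (Icc 0 1) x| ≤ _
  rw [(hasDerivWithinAt_gaussPF hgd hC hM' hx).derivWithin (uniqueDiffOn_Icc zero_lt_one x hx),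
    tsum_sub_mul_add_eq_tsum_mul_sub_add abelWeight_zero (tendsto_abelWeight_mul hC hx.1)
      (summable_gaussTermDeriv hC hM' hx.1)
      (((hasSum_two_mul_zetaR_three_sub_zetaR_two.mul_left M).summable).of_norm_bounded
        fun _ => abs_abelTerm_add_gaussChainTerm_le hgd hM' hx.1)]
  exact (tsum_of_norm_bounded (hasSum_two_mul_zetaR_three_sub_zetaR_two.mul_left M) fun _ =>
    (Real.norm_eq_abs _).trans_le (abs_abelTerm_add_gaussChainTerm_le hgd hM' hx.1)).trans_eq
    (mul_comm _ _)
end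

section
/- For the Gauss map τ(x) = 1/x - ⌊1/x⌋ and the Gauss measure γ(A) = (1/log 2) ∫_A dx/(x+1) on the Borel sets of [0,1], γ is τ-invariant: γ(τ^{-1}(A)) = γ(A) for every Borel set A ⊆ [0,1]. -/
open MeasureTheory

/-- The Gauss (continued fraction) map. -/
noncomputable def gaussMap (x : ℝ) : ℝ := if x = 0 then 0 else 1 / x - ⌊1 / x⌋

/-- The Gauss measure on `[0,1]`, with density `1/((x+1) log 2)` w.r.t. Lebesgue. -/
noncomputable def gaussMeasure : Measure ℝ :=
  (volume.restrict (Set.Icc (0:ℝ) 1)).withDensity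
    (fun x => ENNReal.ofReal (1 / ((x + 1) * Real.log 2)))

/-! On `(0, 1]` the Gauss map has the inverse branches `y ↦ 1 / (y + n + 1)`, `n ≥ 0`, defined on
`[0, 1)` with disjoint images. By the change of variables formula the preimage measure of `A`
is therefore the integral over `A` of the transfer operator applied to the density, and the Gauss
density `1 / (x + 1)` is a fixed point of that operator because of the telescoping identity
`∑ 1 / ((y + n + 1) (y + n + 2)) = 1 / (y + 1)`. -/

open Set Filter Topology Function
open scoped ENNReal

theorem gaussMap_eq_fract_inv (x : ℝ) : gaussMap x = Int.fract x⁻¹ := by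
  rcases eq_or_ne x 0 with rfl | hx
  · simp [gaussMap]
  · rw [gaussMap, if_neg hx, one_div, Int.self_sub_floor]

theorem measurable_gaussMap : Measurable gaussMap := by
  rw [show gaussMap = Int.fract ∘ Inv.inv from funext gaussMap_eq_fract_inv]
  exact measurable_fract.comp measurable_inv

noncomputable def gaussBranch (n : ℕ) (y : ℝ) : ℝ := (y + (n + 1))⁻¹

theorem gaussBranch_injective (n : ℕ) : Function.Injective (gaussBranch n) :=
  inv_injective.comp (add_left_injective _)

theorem hasDerivAt_gaussBranch (n : ℕ) {y : ℝ} (hy : 0 ≤ y) :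
    HasDerivAt (gaussBranch n) (-1 / (y + (n + 1)) ^ 2) y :=
  ((hasDerivAt_id y).add_const _).inv (by positivity)

theorem mem_gaussBranch_image_iff {A : Set ℝ} {n : ℕ} {x : ℝ} :
    x ∈ gaussBranch n '' (A ∩ Ico 0 1) ↔ 0 < x ∧ ⌊x⁻¹⌋ = n + 1 ∧ gaussMap x ∈ A := by
  constructor
  · rintro ⟨y, ⟨hyA, hy⟩, rfl⟩
    have hfract : Int.fract y = y := Int.fract_eq_self.2 hy
    have hy0 : 0 ≤ y := hy.1
    refine ⟨by simp only [gaussBranch]; positivity, ?_, ?_⟩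
    · rw [gaussBranch, inv_inv, Int.floor_eq_iff]
      push_cast
      constructor <;> linarith [hy.2]
    · rwa [gaussMap_eq_fract_inv, gaussBranch, inv_inv, ← Nat.cast_succ, Int.fract_add_natCast,
        hfract]
  · rintro ⟨hx, hfloor, hA⟩
    rw [gaussMap_eq_fract_inv] at hA
    refine ⟨Int.fract x⁻¹, ⟨hA, Int.fract_nonneg _, Int.fract_lt_one _⟩, ?_⟩
    have hx' : Int.fract x⁻¹ + (n + 1) = x⁻¹ := by
      conv_rhs => rw [← Int.fract_add_floor x⁻¹, hfloor]
      push_cast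
      ring
    rw [gaussBranch, hx', inv_inv]

theorem preimage_gaussMap_inter_Ioc (A : Set ℝ) :
    gaussMap ⁻¹' A ∩ Ioc 0 1 = ⋃ n : ℕ, gaussBranch n '' (A ∩ Ico 0 1) := by
  ext x
  simp only [mem_iUnion, mem_gaussBranch_image_iff, mem_inter_iff, mem_preimage, mem_Ioc]
  constructor
  · rintro ⟨hA, hx, hx1⟩
    have : 1 ≤ ⌊x⁻¹⌋ := Int.le_floor.2 (by simpa using one_le_inv₀ hx |>.2 hx1)
    exact ⟨(⌊x⁻¹⌋ - 1).toNat, hx, by omega, hA⟩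
  · rintro ⟨n, hx, hfloor, hA⟩
    have : (1 : ℝ) ≤ x⁻¹ := by exact_mod_cast Int.le_floor.1 (by omega : (1 : ℤ) ≤ ⌊x⁻¹⌋)
    exact ⟨hA, hx, (one_le_inv₀ hx).1 this⟩

theorem pairwise_disjoint_gaussBranch_image (A : Set ℝ) :
    Pairwise (Disjoint on fun n => gaussBranch n '' (A ∩ Ico 0 1)) := by
  intro m n hmn
  refine Set.disjoint_left.2 fun x hm hn => hmn ?_
  rw [mem_gaussBranch_image_iff] at hm hn
  have := hm.2.1.symm.trans hn.2.1
  omega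

theorem measurableSet_gaussBranch_image {s : Set ℝ} (hs : MeasurableSet s) (hs0 : s ⊆ Ici 0)
    (n : ℕ) : MeasurableSet (gaussBranch n '' s) :=
  measurable_image_of_fderivWithin hs
    (fun _ hy => (hasDerivAt_gaussBranch n (hs0 hy)).hasFDerivAt.hasFDerivWithinAt)
    (gaussBranch_injective n).injOn

theorem lintegral_gaussBranch_image {s : Set ℝ} (hs : MeasurableSet s) (hs0 : s ⊆ Ici 0)
    (n : ℕ) (g : ℝ → ℝ≥0∞) :
    ∫⁻ x in gaussBranch n '' s, g x =
      ∫⁻ y in s, ENNReal.ofReal ((y + (n + 1)) ^ 2)⁻¹ * g (gaussBranch n y) := by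
  rw [lintegral_image_eq_lintegral_abs_deriv_mul hs
    (fun y hy => (hasDerivAt_gaussBranch n (hs0 hy)).hasDerivWithinAt)
    (gaussBranch_injective n).injOn]
  refine setLIntegral_congr_fun hs fun _ _ => ?_
  rw [neg_div, abs_neg, one_div, abs_of_nonneg (by positivity)]

/-- The Perron–Frobenius (transfer) operator of the Gauss map. -/
noncomputable def gaussTransfer (g : ℝ → ℝ≥0∞) (y : ℝ) : ℝ≥0∞ :=
  ∑' n : ℕ, ENNReal.ofReal ((y + (n + 1)) ^ 2)⁻¹ * g (gaussBranch n y)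

theorem lintegral_preimage_gaussMap {g : ℝ → ℝ≥0∞} (hg : Measurable g) {A : Set ℝ}
    (hA : MeasurableSet A) :
    ∫⁻ x in gaussMap ⁻¹' A ∩ Ioc 0 1, g x = ∫⁻ y in A ∩ Ico 0 1, gaussTransfer g y := by
  have hs : MeasurableSet (A ∩ Ico 0 1) := hA.inter measurableSet_Ico
  have hs0 : A ∩ Ico 0 1 ⊆ Ici 0 := fun y hy => hy.2.1
  rw [preimage_gaussMap_inter_Ioc, lintegral_iUnion (measurableSet_gaussBranch_image hs hs0)
    (pairwise_disjoint_gaussBranch_image A)]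
  unfold gaussTransfer
  rw [lintegral_tsum]
  · simp only [lintegral_gaussBranch_image hs hs0]
  · intro n
    refine (ENNReal.measurable_ofReal.comp ?_).mul (hg.comp ?_) |>.aemeasurable
    · fun_prop
    · exact measurable_inv.comp (measurable_add_const _)

theorem hasSum_inv_mul_inv_add_one {a : ℝ} (ha : 0 < a) :
    HasSum (fun n : ℕ => ((a + n) * (a + n + 1))⁻¹) a⁻¹ := by
  have hterm (n : ℕ) : ((a + n) * (a + n + 1))⁻¹ = (a + n)⁻¹ - (a + ↑(n + 1))⁻¹ := by
    have : 0 < a + n := by positivity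
    push_cast
    field_simp
    ring
  have hlim : Tendsto (fun n : ℕ => (a + n)⁻¹) atTop (𝓝 0) :=
    tendsto_inv_atTop_zero.comp (tendsto_atTop_add_const_left _ a tendsto_natCast_atTop_atTop)
  rw [hasSum_iff_tendsto_nat_of_nonneg (fun n => by positivity)]
  simp only [hterm, Finset.sum_range_sub', Nat.cast_zero, add_zero]
  simpa using (tendsto_const_nhds (x := a⁻¹)).sub hlim

noncomputable def gaussDensity (x : ℝ) : ℝ≥0∞ := ENNReal.ofReal (1 / ((x + 1) * Real.log 2))

theorem measurable_gaussDensity : Measurable gaussDensity := by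
  unfold gaussDensity
  fun_prop

theorem gaussMeasure_apply {s : Set ℝ} (hs : MeasurableSet s) :
    gaussMeasure s = ∫⁻ x in s ∩ Icc 0 1, gaussDensity x := by
  rw [gaussMeasure, withDensity_apply _ hs, Measure.restrict_restrict hs]
  rfl

theorem gaussTransfer_gaussDensity {y : ℝ} (hy : 0 ≤ y) :
    gaussTransfer gaussDensity y = gaussDensity y := by
  have hlog : 0 < Real.log 2 := Real.log_pos one_lt_two
  have hterm (n : ℕ) : ENNReal.ofReal ((y + (n + 1)) ^ 2)⁻¹ * gaussDensity (gaussBranch n y) =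
      ENNReal.ofReal (((y + 1 + n) * (y + 1 + n + 1))⁻¹ / Real.log 2) := by
    have : 0 < y + (n + 1) := by positivity
    rw [gaussDensity, ← ENNReal.ofReal_mul (by positivity), gaussBranch]
    congr 1
    field_simp
    ring
  have hsum := (hasSum_inv_mul_inv_add_one (by positivity : 0 < y + 1)).div_const (Real.log 2)
  rw [gaussTransfer, tsum_congr hterm,
    ← ENNReal.ofReal_tsum_of_nonneg (fun n => by positivity) hsum.summable, hsum.tsum_eq,
    gaussDensity, inv_div_left, one_div, mul_comm]

theorem gauss_measure_invariant :
    ∀ A : Set ℝ, MeasurableSet A → A ⊆ Set.Icc (0:ℝ) 1 →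
      gaussMeasure (gaussMap ⁻¹' A) = gaussMeasure A := by
  intro A hA _
  rw [gaussMeasure_apply (measurable_gaussMap hA), gaussMeasure_apply hA,
    ← setLIntegral_congr ((ae_eq_refl (gaussMap ⁻¹' A)).inter (Ioc_ae_eq_Icc (μ := volume))),
    ← setLIntegral_congr ((ae_eq_refl A).inter (Ico_ae_eq_Icc (μ := volume))),
    lintegral_preimage_gaussMap measurable_gaussDensity hA]
  exact setLIntegral_congr_fun (hA.inter measurableSet_Ico) fun y hy =>
    gaussTransfer_gaussDensity hy.2.1
end
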